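/- arXiv:2406.02981 — 2 statements merged into one kernel-verified Lean document; each statement's English description precedes it below -/
import Mathlib

section
/- Let f : {0,1}^n → {0,1} be a Boolean function and let 𝕊 be the family of all subsets T ⊆ {1,…,n} such that T is a local sufficient reason for (f,x) for some x ∈ {0,1}^n. Then a subset S ⊆ {1,…,n} is a global contrastive reason for f if and only if S is a hitting set for 𝕊, i.e., S ∩ T ≠ ∅ for every T ∈ 𝕊. -/
/-!
Local sufficient reasons for `(f, x)` are closed under supersets, and every set disjoint from `S`
lies in `Sᶜ`; so `S` hits all of them iff `Sᶜ` is sufficient for no `x`. Fixing `x` on `Sᶜ`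
leaves exactly the coordinates in `S` free, so `Sᶜ` is sufficient for `(f, x)` iff no change
of `x` on `S` flips `f`, i.e. iff `S` is not contrastive at `x`.
-/

/-- `comb S x z` is the input that equals `x` on coordinates in `S` and `z` outside `S`. -/
def comb {n : ℕ} (S : Finset (Fin n)) (x z : Fin n → Bool) : Fin n → Bool :=
  fun i => if i ∈ S then x i else z i

/-- `S` is a local sufficient reason for `(f, x)`. -/
def LocalSuff {n : ℕ} (f : (Fin n → Bool) → Bool) (x : Fin n → Bool)
    (S : Finset (Fin n)) : Prop :=
  ∀ z : Fin n → Bool, f (comb S x z) = f x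

/-- `S` is a global contrastive reason for `f`. -/
def GlobalContrastive {n : ℕ} (f : (Fin n → Bool) → Bool) (S : Finset (Fin n)) : Prop :=
  ∀ x : Fin n → Bool, ∃ z : Fin n → Bool, f (comb S z x) ≠ f x

section

variable {n : ℕ} {f : (Fin n → Bool) → Bool} {x : Fin n → Bool} {S T : Finset (Fin n)}

theorem comb_compl (S : Finset (Fin n)) (x z : Fin n → Bool) : comb Sᶜ x z = comb S z x := by
  funext i
  by_cases hi : i ∈ S <;> simp [comb, hi]

theorem comb_comb_of_subset (h : T ⊆ S) (x z : Fin n → Bool) :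
    comb T x (comb S x z) = comb S x z := by
  funext i
  by_cases hi : i ∈ T
  · simp [comb, hi, h hi]
  · simp [comb, hi]

theorem LocalSuff.mono (hT : LocalSuff f x T) (h : T ⊆ S) : LocalSuff f x S := fun z => by
  rw [← comb_comb_of_subset h x z, hT]

theorem localSuff_compl_iff : LocalSuff f x Sᶜ ↔ ∀ z, f (comb S z x) = f x := by
  simp only [LocalSuff, comb_compl]

theorem globalContrastive_iff_forall_not_localSuff_compl :
    GlobalContrastive f S ↔ ∀ x, ¬ LocalSuff f x Sᶜ := by
  simp only [GlobalContrastive, localSuff_compl_iff, not_forall]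

end

theorem global_contrastive_iff_hitting_set_of_sufficients {n : ℕ}
    (f : (Fin n → Bool) → Bool) (S : Finset (Fin n)) :
    GlobalContrastive f S ↔
      ∀ T : Finset (Fin n), (∃ x : Fin n → Bool, LocalSuff f x T) →
        (S ∩ T).Nonempty := by
  rw [globalContrastive_iff_forall_not_localSuff_compl]
  constructor
  · rintro hS T ⟨x, hT⟩
    rw [← Finset.not_disjoint_iff_nonempty_inter]
    exact fun hST => hS x (hT.mono hST.le_compl_left)
  · rintro hS x hx
    simpa using hS Sᶜ ⟨x, hx⟩
end

section
/- Let f : {0,1}^n → {0,1} be a Boolean function and let S be a subset-minimal global sufficient reason for f. Then for every feature i ∈ {1,…,n}: i ∈ S if and only if i is locally necessary for (f,x) for some x ∈ {0,1}^n, and i ∉ S if and only if i is globally redundant for f. -/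
/-- `S` is a global sufficient reason for `f`. -/
def GlobalSuff {n : ℕ} (f : (Fin n → Bool) → Bool) (S : Finset (Fin n)) : Prop :=
  ∀ x z : Fin n → Bool, f (comb S x z) = f x

/-- Feature `i` is locally necessary for `(f, x)`. -/
def LocallyNecessary {n : ℕ} (f : (Fin n → Bool) → Bool) (x : Fin n → Bool)
    (i : Fin n) : Prop :=
  ∀ S : Finset (Fin n), LocalSuff f x S → ¬ LocalSuff f x (S.erase i)

/-- Feature `i` is globally redundant for `f`. -/
def GloballyRedundant {n : ℕ} (f : (Fin n → Bool) → Bool) (i : Fin n) : Prop :=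
  ∀ (x : Fin n → Bool) (S : Finset (Fin n)),
    LocalSuff f x S → LocalSuff f x (S.erase i)

/-!
If `S` is globally sufficient, `f` only sees the coordinates in `S`, so a local sufficient
reason `T` for `x` already fixes `f` on every input agreeing with `x` on `S ∩ T`. Hence a
feature outside `S` can be dropped from any local sufficient reason. For `i ∈ S`, minimality
of `S` yields `x, z` with `f (x_{S∖i}; z) ≠ f x`, and this `x` forces `i` into every local
sufficient reason for `(f, x)`. A globally redundant feature can be dropped from the trivial
local sufficient reason `univ`, so it is never locally necessary.
-/

section

variable {n : ℕ} {f : (Fin n → Bool) → Bool} {S T : Finset (Fin n)} {x z w : Fin n → Bool}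
  {i : Fin n}

@[simp]
lemma comb_apply_of_mem {j : Fin n} (hj : j ∈ S) : comb S x z j = x j := if_pos hj

@[simp]
lemma comb_apply_of_notMem {j : Fin n} (hj : j ∉ S) : comb S x z j = z j := if_neg hj

@[simp]
lemma comb_univ : comb Finset.univ x z = x :=
  funext fun _ => comb_apply_of_mem (Finset.mem_univ _)

lemma localSuff_univ : LocalSuff f x Finset.univ := fun z => by rw [comb_univ]

lemma GlobalSuff.apply_eq_of_eqOn (hS : GlobalSuff f S) (h : Set.EqOn x z S) : f x = f z := by
  have hcomb : comb S x z = z := funext fun j => by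
    by_cases hj : j ∈ S
    · simp [hj, h hj]
    · simp [hj]
  rw [← hS x z, hcomb]

lemma LocalSuff.apply_eq_of_eqOn_inter (hS : GlobalSuff f S) (hT : LocalSuff f x T)
    (hw : Set.EqOn w x ↑(S ∩ T)) : f w = f x := by
  have hagree : Set.EqOn w (comb T x w) S := fun j hjS => by
    by_cases hjT : j ∈ T
    · simpa [hjT] using hw (Finset.mem_inter.2 ⟨hjS, hjT⟩)
    · simp [hjT]
  rw [hS.apply_eq_of_eqOn hagree, hT w]

lemma GlobalSuff.globallyRedundant (hS : GlobalSuff f S) (hi : i ∉ S) :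
    GloballyRedundant f i := by
  intro x T hT z
  refine hT.apply_eq_of_eqOn_inter hS fun j hj => ?_
  obtain ⟨hjS, hjT⟩ := Finset.mem_inter.1 hj
  have hji : j ≠ i := ne_of_mem_of_not_mem hjS hi
  simp [Finset.mem_erase, hji, hjT]

lemma GlobalSuff.exists_locallyNecessary (hS : GlobalSuff f S)
    (hi : ¬ GlobalSuff f (S.erase i)) : ∃ x, LocallyNecessary f x i := by
  obtain ⟨x, z, hxz⟩ : ∃ x z, f (comb (S.erase i) x z) ≠ f x := by
    simpa [GlobalSuff] using hi
  refine ⟨x, fun T _ hTi => hxz (hTi.apply_eq_of_eqOn_inter hS fun j hj => ?_)⟩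
  obtain ⟨hjS, hjT⟩ := Finset.mem_inter.1 hj
  have hji : j ≠ i := Finset.ne_of_mem_erase hjT
  simp [Finset.mem_erase, hji, hjS]

lemma GloballyRedundant.not_locallyNecessary (hi : GloballyRedundant f i) (x : Fin n → Bool) :
    ¬ LocallyNecessary f x i :=
  fun hnec => hnec _ localSuff_univ (hi x _ localSuff_univ)

end

theorem minimal_global_suff_characterization {n : ℕ}
    (f : (Fin n → Bool) → Bool) (S : Finset (Fin n))
    (hS : GlobalSuff f S ∧ ∀ T : Finset (Fin n), T ⊂ S → ¬ GlobalSuff f T) :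
    ∀ i : Fin n,
      (i ∈ S ↔ ∃ x : Fin n → Bool, LocallyNecessary f x i) ∧
      (i ∉ S ↔ GloballyRedundant f i) := by
  obtain ⟨hsuff, hmin⟩ := hS
  have necessary (i : Fin n) (hi : i ∈ S) : ∃ x, LocallyNecessary f x i :=
    hsuff.exists_locallyNecessary (hmin _ (Finset.erase_ssubset hi))
  intro i
  refine ⟨⟨necessary i, fun ⟨x, hx⟩ => ?_⟩,
    ⟨hsuff.globallyRedundant, fun hred hi => ?_⟩⟩
  · by_contra hi
    exact (hsuff.globallyRedundant hi).not_locallyNecessary x hx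
  · obtain ⟨x, hx⟩ := necessary i hi
    exact hred.not_locallyNecessary x hx
end
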